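/- arXiv:1202.0123 — 6 statements merged into one kernel-verified Lean document; each statement's English description precedes it below -/
import Mathlib

section
/- Let A and B be finite multisets of positive integers such that ∏_{a ∈ A} (1 − x^a) = ∏_{b ∈ B} (1 − x^b) as polynomials in ℤ[x]. Then A = B as multisets (in particular they have the same cardinality). -/
/-!
Compare multiplicities exponent by exponent. If `A` and `B` contain every `j < k` equally often,
the factors with exponent `< k` agree on both sides and cancel, since `1 - X ^ a = -(X ^ a - 1)`
is a unit times a monic polynomial. The remaining products involve only exponents `≥ k`, so
their coefficient of `X ^ k` is minus the multiplicity of `k`, which therefore agrees as well.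
-/

open Polynomial

theorem Polynomial.isRegular_one_sub_X_pow {R : Type*} [CommRing R] {a : ℕ} (ha : a ≠ 0) :
    IsRegular (1 - X ^ a : R[X]) := by
  rw [← neg_sub, neg_eq_neg_one_mul, ← C_1]
  exact isUnit_one.neg.isRegular.mul (monic_X_pow_sub_C 1 ha).isRegular

namespace Multiset

variable {R : Type*} [CommRing R]

noncomputable def prodOneSubXPow (S : Multiset ℕ) : R[X] := (S.map fun a => 1 - X ^ a).prod

variable {S T U : Multiset ℕ}

theorem prodOneSubXPow_add :
    (prodOneSubXPow (S + T) : R[X]) = prodOneSubXPow S * prodOneSubXPow T := by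
  simp [prodOneSubXPow]

theorem isRegular_prodOneSubXPow (hS : ∀ a ∈ S, 0 < a) : IsRegular (prodOneSubXPow S : R[X]) :=
  prod_induction _ _ (fun _ _ => IsRegular.mul) isRegular_one
    (by simpa using fun a ha => isRegular_one_sub_X_pow (hS a ha).ne')

theorem prodOneSubXPow_add_right_inj (hS : ∀ a ∈ S, 0 < a) :
    (prodOneSubXPow (S + T) : R[X]) = prodOneSubXPow (S + U) ↔
      (prodOneSubXPow T : R[X]) = prodOneSubXPow U := by
  rw [prodOneSubXPow_add, prodOneSubXPow_add]
  exact (isRegular_prodOneSubXPow hS).left.eq_iff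

theorem coeff_zero_prodOneSubXPow (hS : ∀ a ∈ S, 0 < a) :
    (prodOneSubXPow S : R[X]).coeff 0 = 1 := by
  rw [coeff_zero_eq_eval_zero, prodOneSubXPow, eval_multiset_prod]
  simp +contextual [map_map, (hS _ _).ne']

theorem coeff_prodOneSubXPow_of_forall_le {m : ℕ} (hm : 0 < m) (hS : ∀ a ∈ S, m ≤ a) :
    (prodOneSubXPow S : R[X]).coeff m = -S.count m := by
  induction S using Multiset.induction with
  | empty => simp [prodOneSubXPow, coeff_one, hm.ne']
  | cons a S ih =>
    have hmS : ∀ b ∈ S, m ≤ b := fun b hb => hS b (mem_cons_of_mem hb)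
    rw [prodOneSubXPow, map_cons, prod_cons, ← prodOneSubXPow, sub_mul, one_mul, coeff_sub,
      X_pow_mul, coeff_mul_X_pow', ih hmS]
    rcases (hS a (mem_cons_self a S)).eq_or_lt with rfl | hlt
    · rw [if_pos le_rfl, Nat.sub_self, coeff_zero_prodOneSubXPow fun b hb => hm.trans_le (hmS b hb),
        count_cons_self]
      push_cast
      ring
    · rw [if_neg hlt.not_ge, count_cons_of_ne hlt.ne, sub_zero]

theorem eq_of_prodOneSubXPow_eq [CharZero R] {A B : Multiset ℕ} (hA : ∀ a ∈ A, 0 < a)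
    (hB : ∀ b ∈ B, 0 < b) (h : (prodOneSubXPow A : R[X]) = prodOneSubXPow B) : A = B := by
  refine ext.mpr fun k => ?_
  induction k using Nat.strong_induction_on with
  | _ k ih =>
  rcases k.eq_zero_or_pos with rfl | hk
  · rw [count_eq_zero_of_notMem fun h0 => (hA 0 h0).false,
      count_eq_zero_of_notMem fun h0 => (hB 0 h0).false]
  have hlow : A.filter (· < k) = B.filter (· < k) := by
    ext j
    simp only [count_filter]
    split_ifs with hj
    exacts [ih j hj, rfl]
  have hhigh : (prodOneSubXPow (A.filter (¬ · < k)) : R[X]) =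
      prodOneSubXPow (B.filter (¬ · < k)) := by
    rwa [← filter_add_not (· < k) A, ← filter_add_not (· < k) B, hlow,
      prodOneSubXPow_add_right_inj fun b hb => hB b (mem_of_mem_filter hb)] at h
  have hge (S : Multiset ℕ) : ∀ a ∈ S.filter (¬ · < k), k ≤ a :=
    fun _ ha => not_lt.mp (mem_filter.mp ha).2
  simpa only [coeff_prodOneSubXPow_of_forall_le hk (hge _),
    count_filter_of_pos (p := (¬ · < k)) (lt_irrefl k), neg_inj, Nat.cast_inj]
    using congrArg (coeff · k) hhigh

end Multiset

/-- **Unique factorization of products `∏ (1 - x^a)`.**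
If `A` and `B` are finite multisets of positive integers with
`∏_{a ∈ A} (1 - x^a) = ∏_{b ∈ B} (1 - x^b)` in `ℤ[x]`, then `A = B`. -/
theorem multiset_eq_of_prod_one_sub_X_pow_eq
    (A B : Multiset ℕ) (hA : ∀ a ∈ A, 0 < a) (hB : ∀ b ∈ B, 0 < b)
    (h : (A.map fun a => (1 - Polynomial.X ^ a : Polynomial ℤ)).prod
       = (B.map fun b => (1 - Polynomial.X ^ b : Polynomial ℤ)).prod) :
    A = B :=
  Multiset.eq_of_prodOneSubXPow_eq hA hB h
end

section
/- Let G be a finite simple graph with at least two vertices, let p be a vertex of G that is adjacent to exactly one vertex of G, and let G' be the induced subgraph of G obtained by deleting p. Then for every k ≥ 1, c_k(G) = k·c_{k−1}(G') + (k−1)·c_k(G'), where c_0 of any graph is defined to be 0. -/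
/-- An (ordered) `k`-partition of a finite simple graph `G`: an ordered `k`-tuple of nonempty,
pairwise disjoint independent sets of `G` whose union is the whole vertex set. -/
def SimpleGraph.IsOrderedPartition {V : Type*} [Fintype V] [DecidableEq V]
    (G : SimpleGraph V) {k : ℕ} (J : Fin k → Finset V) : Prop :=
  (∀ i, (J i).Nonempty) ∧ (∀ i j, i ≠ j → Disjoint (J i) (J j)) ∧
    (Finset.univ.biUnion J = Finset.univ) ∧
    (∀ i, ∀ a ∈ J i, ∀ b ∈ J i, ¬ G.Adj a b)

/-- `c_k(G)`: the number of (ordered) `k`-partitions of `G`, with `c_0(G) := 0`. -/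
noncomputable def SimpleGraph.ckPart {V : Type*} [Fintype V] [DecidableEq V]
    (G : SimpleGraph V) (k : ℕ) : ℕ :=
  if k = 0 then 0 else Nat.card {J : Fin k → Finset V // G.IsOrderedPartition J}

/-- `c(G) := (-1)^l * ∑_{k=1}^{l} (-1)^k c_k(G)/k`, where `l` is the number of vertices. -/
noncomputable def SimpleGraph.cInv {V : Type*} [Fintype V] [DecidableEq V]
    (G : SimpleGraph V) : ℚ :=
  (-1 : ℚ) ^ (Fintype.card V) *
    ∑ k ∈ Finset.Icc 1 (Fintype.card V), (-1 : ℚ) ^ k * (G.ckPart k : ℚ) / k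

/-!
An ordered `k`-partition of `G` is the same thing as a proper colouring `c : V → Fin k` using
every colour (the parts are the colour classes). Restrict such a `c` to `G' = G - p` and let `q`
be the neighbour of `p`. If `c` still uses every colour on `G'`, then `c p` can be any colour
other than `c q`: `k - 1` choices for each of the `c_k(G')` colourings of `G'`. Otherwise `p` is
alone in its colour class, so `c` uses exactly the other `k - 1` colours on `G'`; relabelling
them by `Fin.succAbove (c p)` gives `k` choices of `c p` times `c_{k-1}(G')` colourings.
-/

open Function Set

theorem Set.insert_eq_univ_iff {α : Type*} {a : α} {s : Set α} :
    insert a s = univ ↔ s = univ ∨ s = {a}ᶜ := by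
  refine ⟨fun h => ?_, ?_⟩
  · by_cases ha : a ∈ s
    · exact Or.inl (insert_eq_of_mem ha ▸ h)
    · refine Or.inr (ext fun b => ⟨fun hb hba => ha (hba ▸ hb), fun hba => ?_⟩)
      exact (eq_univ_iff_forall.mp h b).resolve_left hba
  · rintro (rfl | rfl)
    · exact insert_eq_of_mem (mem_univ a)
    · exact eq_univ_of_forall fun b => em (b = a)

namespace SimpleGraph

variable {V : Type*}

/-- An unbundled `SimpleGraph.Coloring`. -/
def IsProperColoring {α : Type*} (G : SimpleGraph V) (c : V → α) : Prop :=
  ∀ ⦃u v⦄, G.Adj u v → c u ≠ c v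

section Partitions

variable [Fintype V] [DecidableEq V] {G : SimpleGraph V} {k : ℕ}

theorem IsOrderedPartition.existsUnique_mem {J : Fin k → Finset V} (hJ : G.IsOrderedPartition J)
    (v : V) : ∃! i, v ∈ J i := by
  obtain ⟨i, -, hi⟩ := Finset.mem_biUnion.mp (hJ.2.2.1 ▸ Finset.mem_univ v)
  exact ⟨i, hi, fun j hj => by_contra fun hji => Finset.disjoint_left.mp (hJ.2.1 j i hji) hj hi⟩

theorem isOrderedPartition_fibers {c : V → Fin k} (hsurj : Surjective c)
    (hc : G.IsProperColoring c) : G.IsOrderedPartition fun i => {v | c v = i} := by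
  refine ⟨fun i => ?_, fun i j hij => ?_, ?_, fun i a ha b hb hab => ?_⟩
  · obtain ⟨v, rfl⟩ := hsurj i
    exact ⟨v, by simp⟩
  · simp only [Finset.disjoint_left, Finset.mem_filter, Finset.mem_univ, true_and]
    rintro v rfl
    exact hij
  · ext v
    simp
  · simp only [Finset.mem_filter, Finset.mem_univ, true_and] at ha hb
    exact hc hab (ha.trans hb.symm)

theorem card_orderedPartitions_eq_card_surjective_properColorings :
    Nat.card {J : Fin k → Finset V // G.IsOrderedPartition J} =
      Nat.card {c : V → Fin k // Surjective c ∧ G.IsProperColoring c} := by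
  refine (Nat.card_congr (Equiv.ofBijective (fun c => ⟨fun i => {v | c.1 v = i},
    isOrderedPartition_fibers c.2.1 c.2.2⟩) ⟨?_, ?_⟩)).symm
  · rintro ⟨c, hc⟩ ⟨d, hd⟩ h
    ext v : 2
    have hfib : ∀ i, ({w | c w = i} : Finset V) = ({w | d w = i} : Finset V) :=
      congrFun (congrArg Subtype.val h)
    simpa [eq_comm] using Finset.ext_iff.mp (hfib (c v)) v
  · rintro ⟨J, hJ⟩
    choose c hc hcu using hJ.existsUnique_mem
    have hmem : ∀ v i, v ∈ J i ↔ c v = i :=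
      fun v i => ⟨fun h => (hcu v i h).symm, fun h => h ▸ hc v⟩
    refine ⟨⟨c, fun i => ?_, fun u v huv hcuv => ?_⟩, ?_⟩
    · obtain ⟨v, hv⟩ := hJ.1 i
      exact ⟨v, (hmem v i).1 hv⟩
    · exact hJ.2.2.2 (c v) u (hcuv ▸ hc u) v (hc v) huv
    · ext i v : 3
      simp [hmem]

theorem ckPart_eq_card_surjective_properColorings [Nonempty V] (k : ℕ) :
    G.ckPart k = Nat.card {c : V → Fin k // Surjective c ∧ G.IsProperColoring c} := by
  rcases k with _ | k
  · simp [ckPart]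
  · rw [ckPart, if_neg k.succ_ne_zero, card_orderedPartitions_eq_card_surjective_properColorings]

end Partitions

section Counting

variable {W : Type*} {m : ℕ}

theorem card_prod_subtype_ne_apply (P : (W → Fin (m + 1)) → Prop) (w : W) :
    Nat.card {x : Fin (m + 1) × (W → Fin (m + 1)) // P x.2 ∧ x.1 ≠ x.2 w} =
      Nat.card {c // P c} * m := by
  let e : {x : Fin (m + 1) × (W → Fin (m + 1)) // P x.2 ∧ x.1 ≠ x.2 w} ≃
      Σ c : {c // P c}, {a // a ≠ c.1 w} :=
    { toFun x := ⟨⟨x.1.2, x.2.1⟩, ⟨x.1.1, x.2.2⟩⟩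
      invFun y := ⟨(y.2.1, y.1.1), y.1.2, y.2.2⟩
      left_inv _ := rfl
      right_inv _ := rfl }
  rw [Nat.card_congr (e.trans ((Equiv.sigmaCongrRight fun c : {c // P c} =>
      (finSuccAboveEquiv (c.1 w)).symm).trans (Equiv.sigmaEquivProd _ _))),
    Nat.card_prod, Nat.card_eq_fintype_card (α := Fin m), Fintype.card_fin]

variable (H : SimpleGraph W)

noncomputable def succAboveCompEquiv (a : Fin (m + 1)) :
    {c : W → Fin m // Surjective c ∧ H.IsProperColoring c} ≃
      {c : W → Fin (m + 1) // range c = {a}ᶜ ∧ H.IsProperColoring c} :=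
  Equiv.ofBijective
    (fun c => ⟨a.succAbove ∘ c.1,
      by rw [range_comp, c.2.1.range_eq, image_univ, Fin.range_succAbove],
      fun u v huv => Fin.succAbove_right_injective.ne (c.2.2 huv)⟩)
    ⟨fun c d h => Subtype.ext (Fin.succAbove_right_injective.comp_left (congrArg Subtype.val h)),
      fun ⟨c, hr, hc⟩ => by
        obtain ⟨c', rfl⟩ :=
          range_subset_range_iff_exists_comp.mp (hr.trans (Fin.range_succAbove a).symm).subset
        refine ⟨⟨c', ?_, fun u v huv h => hc huv (congrArg a.succAbove h)⟩, rfl⟩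
        rw [← range_eq_univ]
        apply (image_injective.mpr Fin.succAbove_right_injective)
        rw [← range_comp, hr, image_univ, Fin.range_succAbove]⟩

theorem card_prod_range_eq_compl :
    Nat.card {x : Fin (m + 1) × (W → Fin (m + 1)) //
        range x.2 = {x.1}ᶜ ∧ H.IsProperColoring x.2} =
      (m + 1) * Nat.card {c : W → Fin m // Surjective c ∧ H.IsProperColoring c} := by
  rw [Nat.card_congr ((Equiv.subtypeProdEquivSigmaSubtype fun a c =>
      range c = {a}ᶜ ∧ H.IsProperColoring c).trans
    ((Equiv.sigmaCongrRight fun a => (succAboveCompEquiv H a).symm).trans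
      (Equiv.sigmaEquivProd _ _))), Nat.card_prod, Nat.card_eq_fintype_card (α := Fin (m + 1)),
    Fintype.card_fin]

end Counting

section VertexDeletion

variable {α : Type*} (G : SimpleGraph V) (p : V)

theorem isProperColoring_iff_domRestrict_ne (c : V → α) :
    G.IsProperColoring c ↔
      (G.induce {u | u ≠ p}).IsProperColoring ({u | u ≠ p}.domRestrict c) ∧
        ∀ v, G.Adj p v → c p ≠ c v := by
  refine ⟨fun hc => ⟨fun u v huv => hc huv, fun v hv => hc hv⟩, ?_⟩
  rintro ⟨hc', hp⟩ u v huv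
  by_cases hu : u = p
  · subst hu
    exact hp v huv
  by_cases hv : v = p
  · subst hv
    exact (hp u huv.symm).symm
  exact hc' (u := ⟨u, hu⟩) (v := ⟨v, hv⟩) huv

theorem range_eq_insert_range_domRestrict_ne (c : V → α) :
    range c = insert (c p) (range ({u | u ≠ p}.domRestrict c)) := by
  rw [range_domRestrict, ← image_insert_eq, ← image_univ]
  congr
  exact (eq_univ_of_forall fun v => em (v = p)).symm

theorem surjective_and_isProperColoring_iff_of_pendant {q : {u | u ≠ p}}
    (hq : ∀ v, G.Adj p v ↔ v = q) (c : V → α) :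
    Surjective c ∧ G.IsProperColoring c ↔
      ((Surjective ({u | u ≠ p}.domRestrict c) ∧
          (G.induce {u | u ≠ p}).IsProperColoring ({u | u ≠ p}.domRestrict c)) ∧
          c p ≠ c q) ∨
        (range ({u | u ≠ p}.domRestrict c) = {c p}ᶜ ∧
          (G.induce {u | u ≠ p}).IsProperColoring ({u | u ≠ p}.domRestrict c)) := by
  have hne : range ({u | u ≠ p}.domRestrict c) = {c p}ᶜ → c p ≠ c q := fun h =>
    Ne.symm (h ▸ mem_range_self q : c q ∈ ({c p}ᶜ : Set α))
  rw [← range_eq_univ, range_eq_insert_range_domRestrict_ne p, insert_eq_univ_iff, range_eq_univ,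
    isProperColoring_iff_domRestrict_ne G p]
  simp only [hq, forall_eq]
  tauto

theorem card_surjective_properColorings_of_pendant [Finite V] [DecidableEq V] {q : {u | u ≠ p}}
    (hq : ∀ v, G.Adj p v ↔ v = q) (m : ℕ) :
    Nat.card {c : V → Fin (m + 1) // Surjective c ∧ G.IsProperColoring c} =
      (m + 1) * Nat.card {c : {u | u ≠ p} → Fin m //
          Surjective c ∧ (G.induce {u | u ≠ p}).IsProperColoring c} +
        Nat.card {c : {u | u ≠ p} → Fin (m + 1) //
          Surjective c ∧ (G.induce {u | u ≠ p}).IsProperColoring c} * m := by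
  classical
  let ontoRest (x : Fin (m + 1) × ({u | u ≠ p} → Fin (m + 1))) : Prop :=
    (Surjective x.2 ∧ (G.induce {u | u ≠ p}).IsProperColoring x.2) ∧ x.1 ≠ x.2 q
  let pAlone (x : Fin (m + 1) × ({u | u ≠ p} → Fin (m + 1))) : Prop :=
    range x.2 = {x.1}ᶜ ∧ (G.induce {u | u ≠ p}).IsProperColoring x.2
  have hsplit : {c : V → Fin (m + 1) // Surjective c ∧ G.IsProperColoring c} ≃
      {x // ontoRest x ∨ pAlone x} :=
    (Equiv.funSplitAt p _).subtypeEquiv (surjective_and_isProperColoring_iff_of_pendant G p hq)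
  have hdisj : Disjoint ontoRest pAlone := Pi.disjoint_iff.mpr fun x => Prop.disjoint_iff.mpr
    fun ⟨⟨⟨hsurj, _⟩, _⟩, hrange, _⟩ =>
      (hrange ▸ hsurj.range_eq ▸ mem_univ x.1 : x.1 ∈ ({x.1}ᶜ : Set _)) rfl
  rw [Nat.card_congr (hsplit.trans (subtypeOrEquiv _ _ hdisj)), Nat.card_sum]
  simp only [ontoRest, pAlone]
  rw [card_prod_subtype_ne_apply
      (fun c => Surjective c ∧ (G.induce {u | u ≠ p}).IsProperColoring c),
    card_prod_range_eq_compl, add_comm]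

end VertexDeletion

end SimpleGraph

theorem ckPart_pendant_vertex_general {V : Type*} [Fintype V] [DecidableEq V]
    (G : SimpleGraph V)
    (p : V) (hp : ∃! q : V, G.Adj p q) (k : ℕ) :
    G.ckPart k =
      k * (G.induce {u | u ≠ p}).ckPart (k - 1) + (k - 1) * (G.induce {u | u ≠ p}).ckPart k := by
  obtain ⟨q, hpq, hq⟩ := hp
  have hqp : q ≠ p := (G.ne_of_adj hpq).symm
  have hadj : ∀ v, G.Adj p v ↔ v = (⟨q, hqp⟩ : {u | u ≠ p}) :=
    fun v => ⟨hq v, (· ▸ hpq)⟩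
  have : Nonempty {u | u ≠ p} := ⟨⟨q, hqp⟩⟩
  have : Nonempty V := ⟨p⟩
  cases k with
  | zero => simp [SimpleGraph.ckPart]
  | succ m =>
    simp only [SimpleGraph.ckPart_eq_card_surjective_properColorings,
      SimpleGraph.card_surjective_properColorings_of_pendant G p hadj, Nat.add_sub_cancel,
      mul_comm]

/-- **Deleting a pendant vertex: `c_k` recursion.** If `p` is a vertex of `G` adjacent to
exactly one vertex, and `G'` is obtained by deleting `p`, then
`c_k(G) = k·c_{k−1}(G') + (k−1)·c_k(G')` for all `k ≥ 1`. -/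
theorem ckPart_pendant_vertex {V : Type*} [Fintype V] [DecidableEq V]
    (G : SimpleGraph V) (hV : 2 ≤ Fintype.card V)
    (p : V) (hp : ∃! q : V, G.Adj p q) (k : ℕ) (hk : 1 ≤ k) :
    G.ckPart k =
      k * (G.induce {u | u ≠ p}).ckPart (k - 1) + (k - 1) * (G.induce {u | u ≠ p}).ckPart k :=
  ckPart_pendant_vertex_general G p hp k
end

section
/- Let G be a finite simple graph with at least two vertices, let p be a vertex of G that is adjacent to exactly one vertex of G, and let G' be the induced subgraph of G obtained by deleting p. Then c(G) = c(G'). -/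
/-! A `k`-partition is the same thing as a surjective proper colouring by `Fin k`. Let `q` be the
neighbour of `p` and `G' = G - p`. A surjective colouring of `G` with `m + 1` colours restricts to
a colouring of `G'` that is either still surjective, and then `p` has one of the `m` colours
other than that of `q`, or misses exactly the colour of `p`, which is then any of the `m + 1`
colours. Hence `c_{m+1}(G) = m c_{m+1}(G') + (m + 1) c_m(G')`, and with this recursion the
alternating sum defining `c(G)` telescopes to `c(G')`. -/

theorem Finset.sum_Icc_neg_one_pow_div_of_rec {K : Type*} [Field K] [CharZero K] {a b : ℕ → K}
    (ha : a 0 = 0) (hb : ∀ m : ℕ, b (m + 1) = m * a (m + 1) + (m + 1) * a m) (N : ℕ) :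
    ∑ k ∈ Icc 1 N, (-1) ^ k * b k / k = (-1) ^ N * a N - ∑ k ∈ Icc 1 N, (-1) ^ k * a k / k := by
  induction N with
  | zero => simp [ha]
  | succ N ih =>
    rw [sum_Icc_succ_top (by omega), sum_Icc_succ_top (by omega), ih, hb]
    push_cast
    field_simp
    ring

lemma Finset.sum_card_subtype_and_ne {T α : Type*} [Fintype T] [Fintype α] [DecidableEq α]
    (P : T → Prop) (f : T → α) :
    ∑ x : α, Nat.card {t // P t ∧ f t ≠ x} = Nat.card {t // P t} * (Fintype.card α - 1) := by
  classical
  simp only [Nat.card_eq_fintype_card, Fintype.card_subtype, Finset.card_filter]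
  rw [Finset.sum_comm, Finset.sum_mul]
  refine Finset.sum_congr rfl fun t _ => ?_
  by_cases ht : P t
  · simp [ht, Finset.sum_ite, ← ne_eq, Finset.filter_ne, Finset.card_univ]
  · simp [ht]

namespace SimpleGraph

variable {V α β : Type*}

abbrev SurjColoring (G : SimpleGraph V) (α : Type*) : Type _ :=
  {C : G.Coloring α // Function.Surjective C}

section Partition

variable [Fintype V] [DecidableEq V] {G : SimpleGraph V} {k : ℕ} {J : Fin k → Finset V}

lemma IsOrderedPartition.existsUnique (h : G.IsOrderedPartition J) (v : V) : ∃! i, v ∈ J i := by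
  obtain ⟨-, hdisj, hcov, -⟩ := h
  obtain ⟨i, -, hi⟩ := Finset.mem_biUnion.mp (hcov ▸ Finset.mem_univ v)
  exact ⟨i, hi, fun j hj => by_contra fun hji => Finset.disjoint_left.mp (hdisj j i hji) hj hi⟩

noncomputable def IsOrderedPartition.part (h : G.IsOrderedPartition J) (v : V) : Fin k :=
  Fintype.choose _ (h.existsUnique v)

lemma IsOrderedPartition.part_eq_iff (h : G.IsOrderedPartition J) {v : V} {i : Fin k} :
    h.part v = i ↔ v ∈ J i :=
  ⟨fun hi => hi ▸ Fintype.choose_spec (fun i => v ∈ J i) (h.existsUnique v),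
    fun hv => (h.existsUnique v).unique (Fintype.choose_spec (fun i => v ∈ J i) _) hv⟩

noncomputable def IsOrderedPartition.toColoring (h : G.IsOrderedPartition J) :
    G.Coloring (Fin k) :=
  Coloring.mk h.part fun {a b} hab hEq =>
    h.2.2.2 _ a (h.part_eq_iff.mp hEq) b (h.part_eq_iff.mp rfl) hab

lemma isOrderedPartition_colorClasses (C : G.SurjColoring (Fin k)) :
    G.IsOrderedPartition fun i => {v | C.1 v = i} := by
  refine ⟨fun i => ?_, fun i j hij => ?_, ?_, fun i a ha b hb hab => ?_⟩
  · obtain ⟨v, hv⟩ := C.2 i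
    exact ⟨v, by simpa using hv⟩
  · exact Finset.disjoint_filter.mpr fun v _ hi hj => hij (hi.symm.trans hj)
  · exact Finset.eq_univ_of_forall fun v => Finset.mem_biUnion.mpr ⟨C.1 v, by simp⟩
  · simp only [Finset.mem_filter, Finset.mem_univ, true_and] at ha hb
    exact C.1.valid hab (ha.trans hb.symm)

variable (G k) in
noncomputable def orderedPartitionEquivSurjColoring :
    {J : Fin k → Finset V // G.IsOrderedPartition J} ≃ G.SurjColoring (Fin k) where
  toFun J := ⟨J.2.toColoring, fun i =>
    let ⟨v, hv⟩ := J.2.1 i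
    ⟨v, J.2.part_eq_iff.mpr hv⟩⟩
  invFun C := ⟨_, isOrderedPartition_colorClasses C⟩
  left_inv J := by
    ext i v
    exact (Finset.mem_filter.trans (and_iff_right (Finset.mem_univ v))).trans J.2.part_eq_iff
  right_inv C := Subtype.ext <| DFunLike.ext _ _ fun v =>
    (isOrderedPartition_colorClasses C).part_eq_iff.mpr (by simp)

variable (G k) in
lemma ckPart_eq_card_surjColoring [Nonempty V] :
    G.ckPart k = Nat.card (G.SurjColoring (Fin k)) := by
  rcases k with _ | k
  · have : IsEmpty (G.SurjColoring (Fin 0)) := ⟨fun C => (C.1 (Classical.arbitrary V)).elim0⟩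
    simp [ckPart]
  · rw [ckPart, if_neg k.succ_ne_zero, Nat.card_congr (orderedPartitionEquivSurjColoring G _)]

end Partition

lemma card_surjColoring_eq_zero_of_card_lt [Fintype V] [Fintype α] (G : SimpleGraph V)
    (h : Fintype.card V < Fintype.card α) : Nat.card (G.SurjColoring α) = 0 :=
  Nat.card_eq_zero.mpr <| .inl ⟨fun C => (Fintype.card_le_of_surjective _ C.2).not_gt h⟩

lemma card_surjColoring_congr (G : SimpleGraph V) (e : α ≃ β) :
    Nat.card (G.SurjColoring α) = Nat.card (G.SurjColoring β) :=
  Nat.card_congr <| (G.recolorOfEquiv e).subtypeEquiv fun C => (e.comp_surjective C).symm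

variable {G : SimpleGraph V}

def coloringRangeEqEquiv (s : Set α) :
    {C : G.Coloring α // Set.range C = s} ≃ G.SurjColoring s where
  toFun C := ⟨Coloring.mk (fun v => ⟨C.1 v, C.2.subset (Set.mem_range_self v)⟩)
      fun hab he => C.1.valid hab (congrArg Subtype.val he),
    fun ⟨y, hy⟩ => by
      rw [← C.2] at hy
      obtain ⟨v, rfl⟩ := hy
      exact ⟨v, rfl⟩⟩
  invFun C := ⟨G.recolorOfEmbedding (Function.Embedding.subtype _) C.1, by
    simp [Set.range_comp, C.2.range_eq]⟩
  left_inv C := rfl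
  right_inv C := rfl

lemma card_coloring_compl_subset_range [Fintype V] [Fintype α] (w : V) (x : α) :
    Nat.card {C : G.Coloring α // C w ≠ x ∧ {x}ᶜ ⊆ Set.range C} =
      Nat.card {C : G.Coloring α // Function.Surjective C ∧ C w ≠ x} +
        Nat.card {C : G.Coloring α // Set.range C = {x}ᶜ} := by
  classical
  simp only [Nat.card_eq_fintype_card]
  rw [← Fintype.card_subtype_or_disjoint]
  · refine Fintype.card_congr (Equiv.subtypeEquivRight fun C => ⟨fun ⟨hw, hx⟩ => ?_, ?_⟩)
    · by_cases hxC : x ∈ Set.range C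
      · refine .inl ⟨fun y => ?_, hw⟩
        by_cases hy : y = x
        · exact hy ▸ hxC
        · exact hx hy
      · refine .inr (hx.antisymm' ?_)
        rintro _ ⟨v, rfl⟩ hv
        exact hxC ⟨v, hv⟩
    · rintro (⟨hC, hw⟩ | hC)
      · exact ⟨hw, fun y _ => hC y⟩
      · exact ⟨hC.subset (Set.mem_range_self w), hC.superset⟩
  · intro P hsurj hrange C hC
    obtain ⟨v, hv⟩ := (hsurj C hC).1 x
    have : C v ∈ ({x}ᶜ : Set α) := (hrange C hC : Set.range C = {x}ᶜ) ▸ Set.mem_range_self v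
    exact this hv

lemma Coloring.surjective_iff_compl_subset_range_comap (C : G.Coloring α) (p : V) :
    Function.Surjective C ↔
      {C p}ᶜ ⊆ Set.range (C.comap (Embedding.induce {u | u ≠ p}).toHom) := by
  refine ⟨fun hC y hy => ?_, fun h y => ?_⟩
  · obtain ⟨v, rfl⟩ := hC y
    exact ⟨⟨v, fun hvp => hy (hvp ▸ rfl)⟩, rfl⟩
  · by_cases hy : y = C p
    · exact ⟨p, hy.symm⟩
    · obtain ⟨v, rfl⟩ := h hy
      exact ⟨v, rfl⟩

section Pendant

variable [DecidableEq V] {p q : V} (hpq : G.Adj p q) (hq : ∀ v, G.Adj p v → v = q)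
include hpq hq

lemma Coloring.valid_dite_of_pendant (C : (G.induce {u | u ≠ p}).Coloring α) (x : α)
    (hx : C ⟨q, hpq.ne'⟩ ≠ x) {a b : V} (hab : G.Adj a b) :
    (if h : a = p then x else C ⟨a, h⟩) ≠ (if h : b = p then x else C ⟨b, h⟩) := by
  by_cases ha : a = p <;> by_cases hb : b = p
  · exact absurd (ha.trans hb.symm) hab.ne
  · subst ha
    obtain rfl := hq b hab
    rw [dif_pos rfl, dif_neg hb]
    exact hx.symm
  · subst hb
    obtain rfl := hq a hab.symm
    rw [dif_pos rfl, dif_neg ha]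
    exact hx
  · rw [dif_neg ha, dif_neg hb]
    exact C.valid (show (G.induce _).Adj ⟨a, ha⟩ ⟨b, hb⟩ from hab)

def pendantColoringEquiv :
    G.Coloring α ≃ {xC : α × (G.induce {u | u ≠ p}).Coloring α // xC.2 ⟨q, hpq.ne'⟩ ≠ xC.1} where
  toFun C := ⟨(C p, C.comap (Embedding.induce _).toHom), C.valid hpq.symm⟩
  invFun xC := Coloring.mk (fun v => if h : v = p then xC.1.1 else xC.1.2 ⟨v, h⟩)
    (Coloring.valid_dite_of_pendant hpq hq xC.1.2 xC.1.1 xC.2)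
  left_inv C := by
    ext v
    by_cases h : v = p
    · subst h; simp [Coloring.mk]
    · simp [Coloring.mk, h]
  right_inv xC := by
    ext v
    · simp [Coloring.mk]
    · exact dif_neg v.2

variable [Fintype V]

lemma card_surjColoring_eq_sum_of_pendant [Fintype α] :
    Nat.card (G.SurjColoring α) = ∑ x : α, Nat.card {C : (G.induce {u | u ≠ p}).Coloring α //
      C ⟨q, hpq.ne'⟩ ≠ x ∧ {x}ᶜ ⊆ Set.range C} := by
  rw [← Nat.card_sigma]
  exact Nat.card_congr <|
    ((pendantColoringEquiv hpq hq).subtypeEquiv fun C =>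
      C.surjective_iff_compl_subset_range_comap p).trans <|
    (Equiv.subtypeSubtypeEquivSubtypeInter _ _).trans <|
    Equiv.subtypeProdEquivSigmaSubtype fun x (C : (G.induce {u | u ≠ p}).Coloring α) =>
      C ⟨q, hpq.ne'⟩ ≠ x ∧ {x}ᶜ ⊆ Set.range C

theorem card_surjColoring_of_pendant [Fintype α] [DecidableEq α] :
    Nat.card (G.SurjColoring α) =
      (Fintype.card α - 1) * Nat.card ((G.induce {u | u ≠ p}).SurjColoring α) +
        Fintype.card α *
          Nat.card ((G.induce {u | u ≠ p}).SurjColoring (Fin (Fintype.card α - 1))) := by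
  have hcompl (x : α) : Nat.card {C : (G.induce {u | u ≠ p}).Coloring α // Set.range C = {x}ᶜ} =
      Nat.card ((G.induce {u | u ≠ p}).SurjColoring (Fin (Fintype.card α - 1))) :=
    (Nat.card_congr (coloringRangeEqEquiv _)).trans <| card_surjColoring_congr _ <|
      Fintype.equivFinOfCardEq (by simp [Finset.filter_ne', Finset.card_univ])
  rw [card_surjColoring_eq_sum_of_pendant hpq hq]
  simp only [card_coloring_compl_subset_range, Finset.sum_add_distrib,
    Finset.sum_card_subtype_and_ne, hcompl, Finset.sum_const, Finset.card_univ, smul_eq_mul]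
  ring

theorem ckPart_succ_of_pendant (m : ℕ) :
    G.ckPart (m + 1) = m * (G.induce {u | u ≠ p}).ckPart (m + 1) +
      (m + 1) * (G.induce {u | u ≠ p}).ckPart m := by
  have : Nonempty V := ⟨p⟩
  have : Nonempty ↥{u | u ≠ p} := ⟨⟨q, hpq.ne'⟩⟩
  simp only [ckPart_eq_card_surjColoring, card_surjColoring_of_pendant hpq hq, Fintype.card_fin,
    Nat.add_sub_cancel]

end Pendant

end SimpleGraph

theorem cInv_pendant_vertex_general {V : Type*} [Fintype V] [DecidableEq V]
    (G : SimpleGraph V)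
    (p : V) (hp : ∃! q : V, G.Adj p q) :
    G.cInv = (G.induce {u | u ≠ p}).cInv := by
  obtain ⟨q, hpq, hq⟩ := hp
  have : Nonempty ↥{u | u ≠ p} := ⟨⟨q, hpq.ne'⟩⟩
  obtain ⟨n, hn⟩ : ∃ n, Fintype.card ↥{u | u ≠ p} = n := ⟨_, rfl⟩
  have hV : Fintype.card V = n + 1 := by
    have := Fintype.card_pos_iff.mpr ⟨p⟩
    rw [← hn, Set.card_ne_eq]
    omega
  have hrec (m : ℕ) : (G.ckPart (m + 1) : ℚ) =
      m * (G.induce {u | u ≠ p}).ckPart (m + 1) + (m + 1) * (G.induce {u | u ≠ p}).ckPart m := by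
    exact_mod_cast G.ckPart_succ_of_pendant hpq hq m
  have hzero : ((G.induce {u | u ≠ p}).ckPart 0 : ℚ) = 0 := by simp [SimpleGraph.ckPart]
  have htop : (G.induce {u | u ≠ p}).ckPart (n + 1) = 0 := by
    rw [SimpleGraph.ckPart_eq_card_surjColoring, SimpleGraph.card_surjColoring_eq_zero_of_card_lt]
    simp [hn]
  rw [SimpleGraph.cInv, SimpleGraph.cInv, hV, hn, Finset.sum_Icc_neg_one_pow_div_of_rec
      (a := fun k => ((G.induce {u | u ≠ p}).ckPart k : ℚ)) hzero hrec,
    Finset.sum_Icc_succ_top (by omega), htop]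
  ring

/-- **Deleting a pendant vertex preserves `c`.** If `p` is a vertex of `G` adjacent to
exactly one vertex, and `G'` is obtained by deleting `p`, then `c(G) = c(G')`. -/
theorem cInv_pendant_vertex {V : Type*} [Fintype V] [DecidableEq V]
    (G : SimpleGraph V) (hV : 2 ≤ Fintype.card V)
    (p : V) (hp : ∃! q : V, G.Adj p q) :
    G.cInv = (G.induce {u | u ≠ p}).cInv :=
  cInv_pendant_vertex_general G p hp
end

section
/- Let G be a finite simple graph, let e be an edge of G with endpoints p ≠ q, let G†_e be the graph obtained from G by deleting the edge e (keeping all vertices and all other edges), and let G_e be the graph obtained from G by contracting e (defined on the vertex set of G with p removed, where distinct vertices s, t are adjacent iff they are adjacent in G, or t = q and s is adjacent to p in G, or s = q and t is adjacent to p in G). Then c(G) = c(G†_e) + c(G_e). -/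
/-- The graph obtained from `G` by contracting the edge between `p` and `q`, defined on the
vertex set of `G` with `p` removed: distinct vertices `s`, `t` are adjacent iff they are
adjacent in `G`, or `t = q` and `s` is adjacent to `p`, or `s = q` and `t` is adjacent to `p`. -/
def SimpleGraph.contractEdge {V : Type*} (G : SimpleGraph V) (p q : V) :
    SimpleGraph {v : V // v ≠ p} where
  Adj s t := s ≠ t ∧ (G.Adj s t ∨ ((t : V) = q ∧ G.Adj s p) ∨ ((s : V) = q ∧ G.Adj t p))
  symm := by
    constructor
    rintro s t ⟨hst, h⟩
    refine ⟨hst.symm, ?_⟩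
    rcases h with h | ⟨h1, h2⟩ | ⟨h1, h2⟩
    · exact Or.inl h.symm
    · exact Or.inr (Or.inr ⟨h1, h2⟩)
    · exact Or.inr (Or.inl ⟨h1, h2⟩)
  loopless := ⟨fun s hs => hs.1 rfl⟩

/-!
Split the ordered partitions of `G` with `e` deleted according to whether `p` and `q` lie in a
common block. Those where they do not are exactly the ordered partitions of `G`. Those where they
do are exactly the preimages of the ordered partitions of `G_e` under the contraction map
`V → V ∖ {p}` sending `p` to `q`, because this map is a surjective homomorphism through which
every edge of `G_e` lifts. Hence `c_k(G†_e) = c_k(G) + c_k(G_e)` for all `k`, and since `G_e` has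
one vertex fewer, the sign `(-1)^l` in `c` flips between `G_e` and the other two graphs.
-/

theorem Nat.card_subtype_eq_card_and_add_card_and_not {α : Type*} [Finite α] (P Q : α → Prop) :
    Nat.card {x // P x} = Nat.card {x // P x ∧ Q x} + Nat.card {x // P x ∧ ¬Q x} := by
  classical
  rw [← Nat.card_sum]
  exact Nat.card_congr <| (Equiv.sumCompl fun x : {x // P x} => Q x).symm.trans <|
    (Equiv.subtypeSubtypeEquivSubtypeInter P Q).sumCongr
      (Equiv.subtypeSubtypeEquivSubtypeInter P (¬Q ·))

namespace SimpleGraph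

section contractEdgeMap

variable {V : Type*} [DecidableEq V] {G : SimpleGraph V} {p q : V} (hqp : q ≠ p)

def contractEdgeMap (x : V) : {v : V // v ≠ p} :=
  if hx : x = p then ⟨q, hqp⟩ else ⟨x, hx⟩

theorem contractEdgeMap_self : contractEdgeMap hqp p = ⟨q, hqp⟩ := dif_pos rfl

theorem contractEdgeMap_of_ne {x : V} (hx : x ≠ p) : contractEdgeMap hqp x = ⟨x, hx⟩ :=
  dif_neg hx

theorem contractEdgeMap_surjective : Function.Surjective (contractEdgeMap hqp) :=
  fun v => ⟨v, contractEdgeMap_of_ne hqp v.2⟩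

variable (G) in
def deleteEdgesHomContractEdge : G.deleteEdges {s(p, q)} →g G.contractEdge p q where
  toFun := contractEdgeMap hqp
  map_rel' {a b} hab := by
    obtain ⟨hab, hne⟩ := (deleteEdges_adj ..).1 hab
    simp only [Set.mem_singleton_iff, Sym2.eq_iff, not_or] at hne
    rcases eq_or_ne a p with ha | ha
    · subst a
      have hb : b ≠ p := hab.ne.symm
      rw [contractEdgeMap_self, contractEdgeMap_of_ne hqp hb]
      exact ⟨fun h => hne.1 ⟨rfl, congrArg Subtype.val h.symm⟩, Or.inr (Or.inr ⟨rfl, hab.symm⟩)⟩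
    rcases eq_or_ne b p with hb | hb
    · subst b
      rw [contractEdgeMap_self, contractEdgeMap_of_ne hqp ha]
      exact ⟨fun h => hne.2 ⟨congrArg Subtype.val h, rfl⟩, Or.inr (Or.inl ⟨rfl, hab⟩)⟩
    · rw [contractEdgeMap_of_ne hqp ha, contractEdgeMap_of_ne hqp hb]
      exact ⟨fun h => hab.ne (congrArg Subtype.val h), Or.inl hab⟩

theorem exists_deleteEdges_adj_of_contractEdge_adj {a b : {v : V // v ≠ p}}
    (hab : (G.contractEdge p q).Adj a b) :
    ∃ x y, contractEdgeMap hqp x = a ∧ contractEdgeMap hqp y = b ∧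
      (G.deleteEdges {s(p, q)}).Adj x y := by
  obtain ⟨hne, hab | ⟨hbq, hap⟩ | ⟨haq, hbp⟩⟩ := hab
  · refine ⟨a, b, contractEdgeMap_of_ne hqp a.2, contractEdgeMap_of_ne hqp b.2,
      (deleteEdges_adj ..).2 ⟨hab, ?_⟩⟩
    simp [a.2, b.2]
  · refine ⟨a, p, contractEdgeMap_of_ne hqp a.2, (contractEdgeMap_self hqp).trans
      (Subtype.ext hbq.symm), (deleteEdges_adj ..).2 ⟨hap, ?_⟩⟩
    have haq : (a : V) ≠ q := fun h => hne (Subtype.ext (h.trans hbq.symm))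
    simp [a.2, haq]
  · refine ⟨p, b, (contractEdgeMap_self hqp).trans (Subtype.ext haq.symm),
      contractEdgeMap_of_ne hqp b.2, (deleteEdges_adj ..).2 ⟨hbp.symm, ?_⟩⟩
    have hbq : (b : V) ≠ q := fun h => hne (Subtype.ext (haq.trans h.symm))
    simp [b.2, hbq]

end contractEdgeMap

variable {V W : Type*} [Fintype V] [DecidableEq V] [Fintype W] [DecidableEq W]

theorem isOrderedPartition_iff (G : SimpleGraph V) {k : ℕ} (J : Fin k → Finset V) :
    G.IsOrderedPartition J ↔
      (∀ i, ∃ a, a ∈ J i) ∧ (∀ a i j, a ∈ J i → a ∈ J j → i = j) ∧ (∀ a, ∃ i, a ∈ J i) ∧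
        ∀ i, ∀ a ∈ J i, ∀ b ∈ J i, ¬G.Adj a b := by
  simp only [IsOrderedPartition, Finset.Nonempty, Finset.eq_univ_iff_forall, Finset.mem_biUnion,
    Finset.mem_univ, true_and, Finset.disjoint_left]
  refine and_congr_right' (and_congr_left' ⟨fun h a i j hi hj => ?_, fun h i j hij a hi hj => ?_⟩)
  · by_contra hij
    exact h i j hij hi hj
  · exact hij (h a i j hi hj)

namespace IsOrderedPartition

variable {G : SimpleGraph V} {k : ℕ} {J : Fin k → Finset V}

theorem exists_mem (hJ : G.IsOrderedPartition J) (a : V) : ∃ i, a ∈ J i :=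
  ((isOrderedPartition_iff G J).1 hJ).2.2.1 a

theorem eq_of_mem_of_mem (hJ : G.IsOrderedPartition J) {a : V} {i j : Fin k}
    (hi : a ∈ J i) (hj : a ∈ J j) : i = j :=
  ((isOrderedPartition_iff G J).1 hJ).2.1 a i j hi hj

theorem card_le (hJ : G.IsOrderedPartition J) : k ≤ Fintype.card V := by
  choose a ha using ((isOrderedPartition_iff G J).1 hJ).1
  simpa using Fintype.card_le_of_injective a fun i j hij =>
    hJ.eq_of_mem_of_mem (ha i) (hij ▸ ha j)

theorem of_le {H : SimpleGraph V} (hHG : H ≤ G) (hJ : G.IsOrderedPartition J) :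
    H.IsOrderedPartition J :=
  ⟨hJ.1, hJ.2.1, hJ.2.2.1, fun i a ha b hb hab => hJ.2.2.2 i a ha b hb (hHG hab)⟩

end IsOrderedPartition

theorem ckPart_eq_zero_of_card_lt (G : SimpleGraph V) {k : ℕ} (hk : Fintype.card V < k) :
    G.ckPart k = 0 := by
  rw [ckPart, if_neg (by omega), Nat.card_eq_zero]
  exact Or.inl ⟨fun J => (J.2.card_le.trans_lt hk).false⟩

theorem cInv_eq_sum_Icc (G : SimpleGraph V) {n : ℕ} (hn : Fintype.card V ≤ n) :
    G.cInv = (-1 : ℚ) ^ Fintype.card V *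
      ∑ k ∈ Finset.Icc 1 n, (-1 : ℚ) ^ k * (G.ckPart k : ℚ) / k := by
  rw [cInv, Finset.sum_subset (Finset.Icc_subset_Icc_right hn)]
  intro k hk hk'
  simp only [Finset.mem_Icc, not_and, not_le] at hk hk'
  simp [G.ckPart_eq_zero_of_card_lt (hk' hk.1)]

theorem isOrderedPartition_preimage_iff {G : SimpleGraph V} {H : SimpleGraph W} (f : G →g H)
    (hf : Function.Surjective f)
    (hlift : ∀ ⦃a b⦄, H.Adj a b → ∃ x y, f x = a ∧ f y = b ∧ G.Adj x y)
    {k : ℕ} (J : Fin k → Finset W) :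
    G.IsOrderedPartition (fun i => ({x | f x ∈ J i} : Finset V)) ↔ H.IsOrderedPartition J := by
  simp only [isOrderedPartition_iff, Finset.mem_filter, Finset.mem_univ, true_and]
  refine and_congr (forall_congr' fun i => hf.exists.symm) <| and_congr
    (hf.forall (p := fun a => ∀ i j, a ∈ J i → a ∈ J j → i = j)).symm <|
    and_congr (hf.forall (p := fun a => ∃ i, a ∈ J i)).symm
      ⟨fun h i a ha b hb hab => ?_, fun h i x hx y hy hxy => ?_⟩
  · obtain ⟨x, y, rfl, rfl, hxy⟩ := hlift hab
    exact h i x ha y hb hxy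
  · exact h i _ hx _ hy (f.map_adj hxy)

theorem card_isOrderedPartition_eq_card_saturated {G : SimpleGraph V} {H : SimpleGraph W}
    (f : G →g H) (hf : Function.Surjective f)
    (hlift : ∀ ⦃a b⦄, H.Adj a b → ∃ x y, f x = a ∧ f y = b ∧ G.Adj x y) (k : ℕ) :
    Nat.card {J : Fin k → Finset W // H.IsOrderedPartition J} =
      Nat.card {J : Fin k → Finset V //
        G.IsOrderedPartition J ∧ ∀ i x y, f x = f y → (x ∈ J i ↔ y ∈ J i)} := by
  have preimage_image (s : Finset V) (hs : ∀ x y, f x = f y → (x ∈ s ↔ y ∈ s)) :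
      ({x | f x ∈ s.image f} : Finset V) = s := by
    ext x
    simp only [Finset.mem_filter, Finset.mem_univ, true_and, Finset.mem_image]
    exact ⟨fun ⟨y, hy, hyx⟩ => (hs y x hyx).1 hy, fun hx => ⟨x, hx, rfl⟩⟩
  have image_preimage (t : Finset W) : ({x | f x ∈ t} : Finset V).image f = t := by
    ext b
    obtain ⟨x, rfl⟩ := hf b
    simp only [Finset.mem_image, Finset.mem_filter, Finset.mem_univ, true_and]
    exact ⟨fun ⟨y, hy, hyx⟩ => hyx ▸ hy, fun hx => ⟨x, hx, rfl⟩⟩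
  refine Nat.card_congr
    { toFun := fun J => ⟨fun i => {x | f x ∈ J.1 i},
        (isOrderedPartition_preimage_iff f hf hlift _).2 J.2, fun i x y hxy => by simp [hxy]⟩
      invFun := fun J => ⟨fun i => (J.1 i).image f, ?_⟩
      left_inv := fun J => Subtype.ext <| funext fun i => image_preimage _
      right_inv := fun J => Subtype.ext <| funext fun i => preimage_image _ (J.2.2 i) }
  rw [← isOrderedPartition_preimage_iff f hf hlift]
  simpa only [preimage_image _ (J.2.2 _)] using J.2.1

variable {G : SimpleGraph V} {p q : V}

theorem isOrderedPartition_iff_deleteEdges (he : G.Adj p q) {k : ℕ} (J : Fin k → Finset V) :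
    G.IsOrderedPartition J ↔
      (G.deleteEdges {s(p, q)}).IsOrderedPartition J ∧ ¬∃ i, p ∈ J i ∧ q ∈ J i := by
  refine ⟨fun hJ => ⟨hJ.of_le (G.deleteEdges_le _), fun ⟨i, hp, hq⟩ => hJ.2.2.2 i p hp q hq he⟩,
    fun ⟨⟨h₁, h₂, h₃, h₄⟩, hsep⟩ => ⟨h₁, h₂, h₃, fun i a ha b hb hab => ?_⟩⟩
  by_cases hab' : s(a, b) = s(p, q)
  · rcases Sym2.eq_iff.1 hab' with ⟨rfl, rfl⟩ | ⟨rfl, rfl⟩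
    exacts [hsep ⟨i, ha, hb⟩, hsep ⟨i, hb, ha⟩]
  · exact h₄ i a ha b hb ((deleteEdges_adj ..).2 ⟨hab, hab'⟩)

theorem IsOrderedPartition.contractEdgeMap_saturated_iff (hqp : q ≠ p) {H : SimpleGraph V}
    {k : ℕ} {J : Fin k → Finset V} (hJ : H.IsOrderedPartition J) :
    (∀ i x y, contractEdgeMap hqp x = contractEdgeMap hqp y → (x ∈ J i ↔ y ∈ J i)) ↔
      ∃ i, p ∈ J i ∧ q ∈ J i := by
  constructor
  · intro h
    obtain ⟨i, hp⟩ := hJ.exists_mem p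
    exact ⟨i, hp, (h i p q (by rw [contractEdgeMap_self, contractEdgeMap_of_ne hqp hqp])).1 hp⟩
  · rintro ⟨i₀, hp, hq⟩ i x y hxy
    have hmem : p ∈ J i ↔ q ∈ J i :=
      ⟨fun h => hJ.eq_of_mem_of_mem hp h ▸ hq, fun h => hJ.eq_of_mem_of_mem hq h ▸ hp⟩
    unfold contractEdgeMap at hxy
    split_ifs at hxy with hx hy hy <;> simp only [Subtype.mk.injEq] at hxy <;> subst_vars
    exacts [Iff.rfl, hmem, hmem.symm, Iff.rfl]

theorem ckPart_deleteEdges (he : G.Adj p q) (k : ℕ) :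
    (G.deleteEdges {s(p, q)}).ckPart k = G.ckPart k + (G.contractEdge p q).ckPart k := by
  rcases eq_or_ne k 0 with rfl | hk
  · simp [ckPart]
  simp only [ckPart, if_neg hk]
  rw [Nat.card_subtype_eq_card_and_add_card_and_not _ fun J => ∃ i, p ∈ J i ∧ q ∈ J i,
    add_comm, card_isOrderedPartition_eq_card_saturated (deleteEdgesHomContractEdge G he.ne')
      (contractEdgeMap_surjective he.ne') fun _ _ => exists_deleteEdges_adj_of_contractEdge_adj _]
  congr 1
  · exact Nat.card_congr <| Equiv.subtypeEquivRight fun J =>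
      (isOrderedPartition_iff_deleteEdges he J).symm
  · exact Nat.card_congr <| Equiv.subtypeEquivRight fun J =>
      and_congr_right fun hJ => (hJ.contractEdgeMap_saturated_iff he.ne').symm

end SimpleGraph

theorem cInv_deletion_contraction_general {V : Type*} [Fintype V] [DecidableEq V]
    (G : SimpleGraph V) (p q : V) (he : G.Adj p q) :
    G.cInv = (G.deleteEdges {s(p, q)}).cInv + (G.contractEdge p q).cInv := by
  have hcard : Fintype.card V = Fintype.card {v : V // v ≠ p} + 1 := by
    simp [Nat.sub_add_cancel (Fintype.card_pos_iff.2 ⟨p⟩)]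
  have hsign : (-1 : ℚ) ^ Fintype.card {v : V // v ≠ p} = -(-1) ^ Fintype.card V := by
    rw [hcard, pow_succ, mul_neg_one, neg_neg]
  rw [(G.contractEdge p q).cInv_eq_sum_Icc (n := Fintype.card V) (by omega), hsign,
    SimpleGraph.cInv, SimpleGraph.cInv]
  simp only [SimpleGraph.ckPart_deleteEdges he, Nat.cast_add, mul_add, add_div,
    Finset.sum_add_distrib]
  ring

/-- **Deletion–contraction for `c`.** For an edge `e` of `G` with endpoints `p ≠ q`,
`c(G) = c(G†_e) + c(G_e)`, where `G†_e` is `G` with `e` deleted and `G_e` is `G` with `e`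
contracted. -/
theorem cInv_deletion_contraction {V : Type*} [Fintype V] [DecidableEq V]
    (G : SimpleGraph V) (p q : V) (hpq : p ≠ q) (he : G.Adj p q) :
    G.cInv = (G.deleteEdges {s(p, q)}).cInv + (G.contractEdge p q).cInv :=
  cInv_deletion_contraction_general G p q he
end

section
/- Let G be a finite simple graph with at least one vertex. If G is disconnected (i.e., not connected), then c(G) = 0. -/
/-!
Up to sign, `c(G)` is the linear coefficient of `P_G = ∑ₖ c_k(G) x (x - 1) ⋯ (x - k + 1) / k!`,
since the linear coefficient of `x (x - 1) ⋯ (x - k + 1)` is `(-1)^(k-1) (k-1)!`. `P_G` is the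
chromatic polynomial: the `k`-partitions of `G` are its surjective proper colorings by `Fin k`
(part `i` is the color class of `i`), and sorting the proper `n`-colorings by their image shows
that `P_G(n)` counts them. A disconnected graph on a nonempty vertex set splits into two nonempty
sides with no edge between them, so `P_G` is the product of their chromatic polynomials, each
vanishing at `0`; hence `X²` divides `P_G`.
-/

open Finset Polynomial

theorem Polynomial.eq_of_eval_natCast_eq {R : Type*} [CommRing R] [IsDomain R] [CharZero R]
    {p q : R[X]} (h : ∀ n : ℕ, p.eval (n : R) = q.eval (n : R)) : p = q :=
  eq_of_infinite_eval_eq p q <| Set.infinite_of_injective_forall_mem Nat.cast_injective h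

theorem Polynomial.coeff_one_descPochhammer_succ (R : Type*) [CommRing R] (m : ℕ) :
    (descPochhammer R (m + 1)).coeff 1 = (-1) ^ m * m.factorial := by
  induction m with
  | zero => simp [descPochhammer_one]
  | succ m ih =>
    rw [descPochhammer_succ_right, mul_sub, coeff_sub, ← C_eq_natCast, coeff_mul_C, coeff_mul_X,
      coeff_zero_eq_eval_zero, descPochhammer_ne_zero_eval_zero R m.succ_ne_zero, ih,
      Nat.factorial_succ]
    push_cast
    ring

namespace SimpleGraph

section Coloring

variable {V W α β : Type*} (G : SimpleGraph V)

theorem card_surjective_coloring_congr (e : α ≃ β) :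
    Nat.card {C : G.Coloring α // Function.Surjective C} =
      Nat.card {C : G.Coloring β // Function.Surjective C} :=
  Nat.card_congr <| (G.recolorOfEquiv e).subtypeEquiv fun C => by
    simp [e.comp_surjective]

theorem card_surjective_coloring_fin_eq_zero [Fintype V] {k : ℕ} (hk : Fintype.card V < k) :
    Nat.card {C : G.Coloring (Fin k) // Function.Surjective C} = 0 := by
  rw [Nat.card_eq_zero]
  refine .inl ⟨fun C => ?_⟩
  have := Fintype.card_le_of_surjective C.1 C.2
  rw [Fintype.card_fin] at this
  omega

def coloringImageEquiv [Fintype V] [DecidableEq α] (s : Finset α) :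
    {C : G.Coloring α // univ.image C = s} ≃ {C : G.Coloring s // Function.Surjective C} where
  toFun C := ⟨Coloring.mk
      (fun v => ⟨C.1 v, congrArg (C.1 v ∈ ·) C.2 ▸ mem_image_of_mem _ (mem_univ v)⟩)
      fun h e => C.1.valid h (congrArg Subtype.val e),
    fun c => by
      obtain ⟨v, -, hv⟩ := mem_image.mp (C.2.symm ▸ c.2 : (c : α) ∈ univ.image C.1)
      exact ⟨v, Subtype.ext hv⟩⟩
  invFun C := ⟨Coloring.mk (fun v => (C.1 v : α)) fun h e => C.1.valid h (Subtype.ext e), by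
      ext c
      simp only [mem_image, mem_univ, true_and]
      exact ⟨fun ⟨v, hv⟩ => hv ▸ (C.1 v).2,
        fun hc => (C.2 ⟨c, hc⟩).imp fun v hv => congrArg Subtype.val hv⟩⟩
  left_inv C := rfl
  right_inv C := rfl

theorem card_coloring_fin_eq_sum [Fintype V] (n : ℕ) :
    Nat.card (G.Coloring (Fin n)) = ∑ k ∈ range (n + 1),
      n.choose k * Nat.card {C : G.Coloring (Fin k) // Function.Surjective C} := by
  rw [← Nat.card_congr (Equiv.sigmaFiberEquiv fun C : G.Coloring (Fin n) => univ.image C),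
    Nat.card_sigma]
  have hfiber (s : Finset (Fin n)) : Nat.card {C : G.Coloring (Fin n) // univ.image C = s} =
      Nat.card {C : G.Coloring (Fin #s) // Function.Surjective C} := by
    rw [Nat.card_congr (G.coloringImageEquiv s), card_surjective_coloring_congr G s.equivFin]
  rw [sum_congr rfl fun s _ => hfiber s, ← powerset_univ,
    sum_powerset_apply_card fun k => Nat.card {C : G.Coloring (Fin k) // Function.Surjective C}]
  simp

theorem card_coloring_sum (H : SimpleGraph W) :
    Nat.card ((G ⊕g H).Coloring α) = Nat.card (G.Coloring α) * Nat.card (H.Coloring α) := by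
  rw [Nat.card_congr Coloring.sumEquiv, Nat.card_prod]

def Iso.sumInduceCompl {s : Set V} [DecidablePred (· ∈ s)]
    (hs : ∀ ⦃a b⦄, G.Adj a b → (a ∈ s ↔ b ∈ s)) : G.induce s ⊕g G.induce sᶜ ≃g G where
  toEquiv := Equiv.Set.sumCompl s
  map_rel_iff' := by
    rintro (⟨a, ha⟩ | ⟨a, ha⟩) (⟨b, hb⟩ | ⟨b, hb⟩)
    · simp
    · simpa using fun h => hb ((hs h).1 ha)
    · simpa using fun h => ha ((hs h).2 hb)
    · simp

end Coloring

section OrderedPartition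

variable {V : Type*} [Fintype V] [DecidableEq V] {G : SimpleGraph V} {k : ℕ}

theorem IsOrderedPartition.eq_of_mem {J : Fin k → Finset V} (hJ : G.IsOrderedPartition J)
    {a : V} {i j : Fin k} (hi : a ∈ J i) (hj : a ∈ J j) : i = j := by
  by_contra hij
  exact Finset.disjoint_left.mp (hJ.2.1 i j hij) hi hj

theorem isOrderedPartition_colorFibers (C : G.Coloring (Fin k)) (hC : Function.Surjective C) :
    G.IsOrderedPartition fun i => univ.filter (C · = i) := by
  refine ⟨fun i => ?_, fun i j hij => ?_, ?_, fun i a ha b hb hab => ?_⟩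
  · obtain ⟨a, ha⟩ := hC i
    exact ⟨a, by simpa using ha⟩
  · exact disjoint_filter.mpr fun a _ hai haj => hij (hai.symm.trans haj)
  · ext a
    simp
  · simp only [mem_filter, mem_univ, true_and] at ha hb
    exact C.valid hab (ha.trans hb.symm)

variable (G) in
theorem ckPart_eq_card_surjective_coloring (hk : k ≠ 0) :
    G.ckPart k = Nat.card {C : G.Coloring (Fin k) // Function.Surjective C} := by
  rw [ckPart, if_neg hk]
  refine (Nat.card_congr (Equiv.ofBijective
    (fun C => ⟨_, isOrderedPartition_colorFibers C.1 C.2⟩) ⟨fun C C' h => ?_, fun J => ?_⟩)).symm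
  · refine Subtype.ext <| DFunLike.ext _ _ fun v => ?_
    simpa [eq_comm] using congrArg (fun J => v ∈ J.1 (C.1 v)) h
  · obtain ⟨J, hJ⟩ := J
    have hcover (a : V) : ∃ i, a ∈ J i := by
      simpa using (hJ.2.2.1.symm ▸ mem_univ a : a ∈ univ.biUnion J)
    choose c hc using hcover
    refine ⟨⟨Coloring.mk c fun {a b} hab hcab => hJ.2.2.2 (c a) a (hc a) b (hcab ▸ hc b) hab,
      fun i => ?_⟩, ?_⟩
    · obtain ⟨a, ha⟩ := hJ.1 i
      exact ⟨a, hJ.eq_of_mem (hc a) ha⟩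
    · ext i a
      simpa using ⟨fun h => h ▸ hc a, fun h => hJ.eq_of_mem (hc a) h⟩

end OrderedPartition

section ChromaticPolynomial

variable {V W : Type*} [Fintype V] [Fintype W] (G : SimpleGraph V) (H : SimpleGraph W)

/-- The chromatic polynomial in the falling-factorial basis: the coefficient of
`x (x - 1) ⋯ (x - k + 1)` is `c_k(G) / k!`. -/
noncomputable def chromaticPolynomial : ℚ[X] :=
  ∑ k ∈ range (Fintype.card V + 1),
    ((Nat.card {C : G.Coloring (Fin k) // Function.Surjective C} : ℚ) / k.factorial) •
      descPochhammer ℚ k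

theorem eval_chromaticPolynomial (n : ℕ) :
    G.chromaticPolynomial.eval (n : ℚ) = Nat.card (G.Coloring (Fin n)) := by
  set f : ℕ → ℕ := fun k => n.choose k * Nat.card {C : G.Coloring (Fin k) // Function.Surjective C}
  have hf : ∀ k, n < k ∨ Fintype.card V < k → f k = 0 := by
    rintro k (hk | hk)
    · simp only [f, Nat.choose_eq_zero_of_lt hk, zero_mul]
    · simp only [f, G.card_surjective_coloring_fin_eq_zero hk, mul_zero]
  have hterm (k : ℕ) : ((Nat.card {C : G.Coloring (Fin k) // Function.Surjective C} : ℚ) /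
      k.factorial) * (descPochhammer ℚ k).eval (n : ℚ) = f k := by
    rw [descPochhammer_eval_eq_descFactorial, Nat.descFactorial_eq_factorial_mul_choose]
    push_cast [f]
    field_simp
  have hsum : ∑ k ∈ range (Fintype.card V + 1), f k = ∑ k ∈ range (n + 1), f k := calc
    ∑ k ∈ range (Fintype.card V + 1), f k = ∑ k ∈ range (Fintype.card V + n + 1), f k :=
        sum_subset (range_subset_range.2 (by omega)) fun k _ hk => by
          simp [hf k (.inr (by simpa using hk))]
    _ = ∑ k ∈ range (n + 1), f k :=
        (sum_subset (range_subset_range.2 (by omega)) fun k _ hk => by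
          simp [hf k (.inl (by simpa using hk))]).symm
  rw [chromaticPolynomial, eval_finsetSum]
  simp only [eval_smul, smul_eq_mul, hterm]
  rw [card_coloring_fin_eq_sum]
  exact_mod_cast hsum

theorem chromaticPolynomial_congr (e : G ≃g H) : G.chromaticPolynomial = H.chromaticPolynomial :=
  eq_of_eval_natCast_eq fun n => by
    rw [eval_chromaticPolynomial, eval_chromaticPolynomial,
      Nat.card_congr (coloringCongr e (Equiv.refl _))]

theorem chromaticPolynomial_sum :
    (G ⊕g H).chromaticPolynomial = G.chromaticPolynomial * H.chromaticPolynomial :=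
  eq_of_eval_natCast_eq fun n => by
    rw [eval_mul, eval_chromaticPolynomial, eval_chromaticPolynomial, eval_chromaticPolynomial,
      card_coloring_sum, Nat.cast_mul]

theorem X_dvd_chromaticPolynomial [Nonempty V] : X ∣ G.chromaticPolynomial := by
  rw [X_dvd_iff, coeff_zero_eq_eval_zero, ← Nat.cast_zero, eval_chromaticPolynomial]
  simp

theorem cInv_eq_coeff_one_chromaticPolynomial [DecidableEq V] :
    G.cInv = (-1) ^ (Fintype.card V + 1) * G.chromaticPolynomial.coeff 1 := by
  have hIcc (f : ℕ → ℚ) : ∑ k ∈ Icc 1 (Fintype.card V), f k =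
      ∑ k ∈ range (Fintype.card V), f (k + 1) := by
    rw [range_eq_Ico, sum_Ico_add' f 0 _ 1]
    rfl
  rw [cInv, chromaticPolynomial, finsetSum_coeff, sum_range_succ', hIcc, pow_succ, mul_assoc]
  simp only [coeff_smul, smul_eq_mul, coeff_one_descPochhammer_succ, descPochhammer_zero,
    coeff_one, one_ne_zero, if_false, mul_zero, add_zero, neg_one_mul, ← sum_neg_distrib,
    ckPart_eq_card_surjective_coloring G (Nat.succ_ne_zero _)]
  congr 1
  refine sum_congr rfl fun k _ => ?_
  rw [Nat.factorial_succ]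
  push_cast
  field_simp
  ring

end ChromaticPolynomial

end SimpleGraph

open SimpleGraph in
theorem cInv_eq_zero_of_not_connected_general {V : Type*} [Fintype V] [DecidableEq V]
    (G : SimpleGraph V) (hG : ¬ G.Connected) :
    G.cInv = 0 := by
  classical
  rcases isEmpty_or_nonempty V with _ | _
  · simp [cInv]
  obtain ⟨u, v, huv⟩ : ∃ u v, ¬ G.Reachable u v := by
    simpa [Preconnected] using fun h : G.Preconnected => hG ⟨h⟩
  let s : Set V := {w | G.Reachable u w}
  have hs : ∀ ⦃a b⦄, G.Adj a b → (a ∈ s ↔ b ∈ s) := fun a b hab =>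
    ⟨fun ha => ha.trans hab.reachable, fun hb => hb.trans hab.symm.reachable⟩
  have : Nonempty s := ⟨⟨u, .rfl⟩⟩
  have : Nonempty ↑sᶜ := ⟨⟨v, huv⟩⟩
  have hX : X ^ 2 ∣ G.chromaticPolynomial := by
    rw [← chromaticPolynomial_congr _ _ (Iso.sumInduceCompl G hs), chromaticPolynomial_sum, sq]
    exact mul_dvd_mul (X_dvd_chromaticPolynomial _) (X_dvd_chromaticPolynomial _)
  rw [cInv_eq_coeff_one_chromaticPolynomial, X_pow_dvd_iff.mp hX 1 one_lt_two, mul_zero]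

/-- **Disconnected graphs.** If `G` is a graph on at least one vertex which is not connected,
then `c(G) = 0`. -/
theorem cInv_eq_zero_of_not_connected {V : Type*} [Fintype V] [DecidableEq V] [Nonempty V]
    (G : SimpleGraph V) (hG : ¬ G.Connected) :
    G.cInv = 0 :=
  cInv_eq_zero_of_not_connected_general G hG
end

section
/- Let R be a finite reduced crystallographic root system spanning a finite-dimensional real vector space V, with base Π and Weyl group W, and let γ ∈ V satisfy ⟨γ, α∨⟩ ∈ ℤ_{>0} for every α ∈ Π. For each w ∈ W, the element γ − wγ lies in the ℤ_{≥0}-span of Π; write γ − wγ = Σ_{α ∈ Π} c_α(w)·α with (uniquely determined) coefficients c_α(w) ∈ ℤ_{≥0}. Then for every w ∈ W and every reduced expression w = s_{α_1}·s_{α_2}·⋯·s_{α_k} with α_1, …, α_k ∈ Π, the set {α_1, …, α_k} equals {α ∈ Π : c_α(w) ≠ 0}. -/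
/-!
Write `w = sᵢ w'` along the reduced word. Since `γ - wγ = (γ - w'γ) + ⟨w'γ, αᵢ∨⟩ αᵢ`, it
suffices that every such increment is positive: then the coefficients of `γ - wγ` only grow,
and its support is exactly the set of letters of the word. By invariance of the canonical form
`B`, `⟨w'γ, αᵢ∨⟩` has the sign of `B(γ, w'⁻¹αᵢ)`, and `f = B(γ, ·)` is positive on the base
because `γ` is strictly dominant; a root is called positive when `f` is positive on it. So it
remains to see that `w'⁻¹αᵢ` is positive. Otherwise, pushing `αᵢ` through the word, using that a
simple reflection `sⱼ` permutes the positive roots other than `αⱼ`, deletes a letter of `w'`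
and yields a shorter expression for `w`.
-/

/-- A base of a root system: a linearly independent subset of the roots such that every root
is either a nonnegative or a nonpositive integer linear combination of its elements. -/
def RootSystem.IsBaseSet {ι V N : Type*} [AddCommGroup V] [Module ℝ V]
    [AddCommGroup N] [Module ℝ N] (P : RootPairing ι ℝ V N) [P.IsRootSystem] (b : Finset ι) : Prop :=
  (LinearIndependent ℝ fun j : b => P.root j) ∧
    ∀ i : ι, ∃ c : ι → ℤ, ((∀ j ∈ b, 0 ≤ c j) ∨ (∀ j ∈ b, c j ≤ 0)) ∧
      P.root i = ∑ j ∈ b, c j • P.root j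

open Finset

namespace RootPairing

section CommRing

variable {ι R M N : Type*} [CommRing R] [AddCommGroup M] [Module R M] [AddCommGroup N] [Module R N]
  (P : RootPairing ι R M N)

def wordProd (l : List ι) : M ≃ₗ[R] M :=
  (l.map fun i => P.reflection i).prod

/-- The index of the root `w⁻¹ αₖ`, where `w = P.wordProd m`. -/
def wordInvIndex : List ι → ι → ι
  | [], k => k
  | j :: m, k => wordInvIndex m (P.reflectionPerm j k)

@[simp]
lemma wordProd_nil : P.wordProd [] = 1 := rfl

@[simp]
lemma wordProd_cons (j : ι) (l : List ι) :
    P.wordProd (j :: l) = P.reflection j * P.wordProd l := by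
  simp [wordProd]

def IsReducedWord (b : Finset ι) (l : List ι) : Prop :=
  (∀ i ∈ l, i ∈ b) ∧ ∀ l' : List ι, (∀ i ∈ l', i ∈ b) →
    P.wordProd l = P.wordProd l' → l.length ≤ l'.length

lemma IsReducedWord.of_cons {b : Finset ι} {i : ι} {t : List ι}
    (hl : P.IsReducedWord b (i :: t)) : P.IsReducedWord b t := by
  refine ⟨fun j hj => hl.1 j (.tail _ hj), fun l' hl' heq => ?_⟩
  have := hl.2 (i :: l') (List.forall_mem_cons.2 ⟨hl.1 i (.head _), hl'⟩) (by simp [heq])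
  simpa using this

variable [Fintype ι]

lemma rootForm_reflection_apply_left (j : ι) (x y : M) :
    P.RootForm (P.reflection j x) y = P.RootForm x (P.reflection j y) := by
  conv_lhs => rw [← P.reflection_same j y]
  exact P.rootForm_reflection_reflection_apply j x (P.reflection j y)

lemma rootForm_wordProd_apply_root (m : List ι) (x : M) (k : ι) :
    P.RootForm (P.wordProd m x) (P.root k) = P.RootForm x (P.root (P.wordInvIndex m k)) := by
  induction m generalizing k with
  | nil => rfl
  | cons j t ih =>
    rw [wordProd_cons, LinearEquiv.mul_apply, rootForm_reflection_apply_left,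
      ← root_reflectionPerm, ih, wordInvIndex]

lemma two_mul_rootForm_apply_root (x : M) (j : ι) :
    2 * P.RootForm x (P.root j) = P.coroot' j x * P.RootForm (P.root j) (P.root j) := by
  have h := P.rootForm_reflection_apply_left j x (P.root j)
  rw [reflection_apply, reflection_apply_self] at h
  simp only [map_sub, map_smul, map_neg, LinearMap.sub_apply, LinearMap.smul_apply,
    smul_eq_mul] at h
  linear_combination h

end CommRing

section Ordered

variable {ι R M N : Type*} [Field R] [LinearOrder R] [IsStrictOrderedRing R]
  [AddCommGroup M] [Module R M] [AddCommGroup N] [Module R N] (P : RootPairing ι R M N)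

lemma rootForm_root_self_pos [Fintype ι] (j : ι) : 0 < P.RootForm (P.root j) (P.root j) := by
  rw [rootForm_root_self]
  exact Finset.sum_pos' (fun i _ => mul_self_nonneg _) ⟨j, Finset.mem_univ _, by simp⟩

lemma rootForm_apply_root_pos_iff [Fintype ι] (x : M) (j : ι) :
    0 < P.RootForm x (P.root j) ↔ 0 < P.coroot' j x := by
  rw [← mul_pos_iff_of_pos_left (two_pos (α := R)), two_mul_rootForm_apply_root,
    mul_pos_iff_of_pos_right (P.rootForm_root_self_pos j)]

variable {P} {b : Finset ι} {f : Module.Dual R M}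

lemma apply_sum_smul_root_pos (hf : ∀ j ∈ b, 0 < f (P.root j)) {c : ι → R}
    (hc : ∀ j ∈ b, 0 ≤ c j) {j₀ : ι} (hj₀ : j₀ ∈ b) (hcj₀ : 0 < c j₀) :
    0 < f (∑ j ∈ b, c j • P.root j) := by
  simp only [map_sum, map_smul, smul_eq_mul]
  exact sum_pos' (fun j hj => mul_nonneg (hc j hj) (hf j hj).le)
    ⟨j₀, hj₀, mul_pos hcj₀ (hf j₀ hj₀)⟩

lemma exists_pos_coeff_ne_of_reduced [P.IsReduced] (hf : ∀ j ∈ b, 0 < f (P.root j))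
    {c : ι → R} (hc : ∀ j ∈ b, 0 ≤ c j) {j k : ι} (hj : j ∈ b) (hkj : k ≠ j)
    (hk : 0 < f (P.root k)) (hck : P.root k = ∑ i ∈ b, c i • P.root i) :
    ∃ m ∈ b, m ≠ j ∧ 0 < c m := by
  by_contra! h
  have hroot : P.root k = c j • P.root j := by
    rw [hck, sum_eq_single j (fun m hm hmj => by rw [le_antisymm (h m hm hmj) (hc m hm),
      zero_smul]) (absurd hj)]
  have hneg : P.root k ≠ -P.root j := fun h' => by
    have := congrArg f h'
    rw [map_neg] at this
    linarith [hf j hj]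
  have := (LinearIndependent.pair_iff.mp (IsReduced.linearIndependent P hkj hneg)) 1 (-c j)
  simp [hroot] at this

end Ordered

end RootPairing

namespace RootSystem.IsBaseSet

open RootPairing

variable {ι V N : Type*} [AddCommGroup V] [Module ℝ V] [AddCommGroup N] [Module ℝ N]
  {P : RootPairing ι ℝ V N} [P.IsRootSystem] {b : Finset ι} {f : Module.Dual ℝ V}

lemma coeff_eq (hb : IsBaseSet P b) {d e : ι → ℝ}
    (h : ∑ j ∈ b, d j • P.root j = ∑ j ∈ b, e j • P.root j) : ∀ j ∈ b, d j = e j :=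
  linearIndepOn_finset_iffₛ.mp hb.1 d e h

lemma exists_coeffs_nonneg_or_nonpos (hb : IsBaseSet P b) (k : ι) :
    ∃ c : ι → ℝ, ((∀ j ∈ b, 0 ≤ c j) ∨ (∀ j ∈ b, c j ≤ 0)) ∧
      P.root k = ∑ j ∈ b, c j • P.root j := by
  obtain ⟨c, hsign, hsum⟩ := hb.2 k
  refine ⟨fun j => c j, ?_, by simp_rw [hsum, Int.cast_smul_eq_zsmul]⟩
  exact hsign.imp (fun h j hj => Int.cast_nonneg (h j hj))
    (fun h j hj => Int.cast_nonpos.2 (h j hj))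

lemma exists_nonneg_coeffs (hb : IsBaseSet P b) (hf : ∀ j ∈ b, 0 < f (P.root j)) {k : ι}
    (hk : 0 < f (P.root k)) :
    ∃ c : ι → ℝ, (∀ j ∈ b, 0 ≤ c j) ∧ P.root k = ∑ j ∈ b, c j • P.root j := by
  obtain ⟨c, hsign | hsign, hsum⟩ := hb.exists_coeffs_nonneg_or_nonpos k
  · exact ⟨c, hsign, hsum⟩
  · refine absurd hk (not_lt.2 ?_)
    simp only [hsum, map_sum, map_smul, smul_eq_mul]
    exact sum_nonpos fun j hj => mul_nonpos_of_nonpos_of_nonneg (hsign j hj) (hf j hj).le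

lemma apply_root_reflectionPerm_pos (hb : IsBaseSet P b) [P.IsReduced]
    (hf : ∀ j ∈ b, 0 < f (P.root j)) {j k : ι} (hj : j ∈ b) (hkj : k ≠ j)
    (hk : 0 < f (P.root k)) : 0 < f (P.root (P.reflectionPerm j k)) := by
  classical
  obtain ⟨c, hc, hck⟩ := hb.exists_nonneg_coeffs hf hk
  obtain ⟨m, hm, hmj, hcm⟩ := exists_pos_coeff_ne_of_reduced hf hc hj hkj hk hck
  have hrefl : P.root (P.reflectionPerm j k) =
      ∑ i ∈ b, (c i - (Pi.single j (P.pairing k j) : ι → ℝ) i) • P.root i := by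
    rw [root_reflectionPerm, reflection_apply_root, hck]
    simp [sub_smul, sum_sub_distrib, Pi.single_apply, hj]
  obtain ⟨e, hsign, he⟩ := hb.exists_coeffs_nonneg_or_nonpos (P.reflectionPerm j k)
  have hem : e m = c m := by
    simpa [Pi.single_apply, hmj] using hb.coeff_eq (he.symm.trans hrefl) m hm
  obtain hsign | hsign := hsign
  · exact he ▸ apply_sum_smul_root_pos hf hsign hm (hem ▸ hcm)
  · exact absurd (hsign m hm) (by linarith)

/-- The deletion property: if `w⁻¹ αₖ` is not positive for a positive root `αₖ`, then `sₖ w`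
is obtained from the word for `w` by deleting a letter. -/
lemma exists_reflection_mul_wordProd_eq (hb : IsBaseSet P b) [P.IsReduced]
    (hf : ∀ j ∈ b, 0 < f (P.root j)) :
    ∀ {m : List ι}, (∀ i ∈ m, i ∈ b) → ∀ {k : ι}, 0 < f (P.root k) →
      ¬ 0 < f (P.root (P.wordInvIndex m k)) →
      ∃ m' : List ι, (∀ i ∈ m', i ∈ b) ∧ m'.length + 1 = m.length ∧
        P.reflection k * P.wordProd m = P.wordProd m'
  | [], _, _, hk, hneg => absurd hk hneg
  | j :: t, hm, k, hk, hneg => by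
    obtain ⟨hj, ht⟩ := List.forall_mem_cons.1 hm
    obtain rfl | hkj := eq_or_ne k j
    · refine ⟨t, ht, rfl, ?_⟩
      rw [wordProd_cons, ← mul_assoc, ← sq, reflection_sq, one_mul]
    obtain ⟨t', ht', hlen, heq⟩ := hb.exists_reflection_mul_wordProd_eq hf ht
      (hb.apply_root_reflectionPerm_pos hf hj hkj hk) hneg
    have hswap : P.reflection k * P.reflection j =
        P.reflection j * P.reflection (P.reflectionPerm j k) := by
      rw [reflection_reflectionPerm, ← mul_assoc, ← mul_assoc, ← sq, reflection_sq, one_mul]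
    refine ⟨j :: t', List.forall_mem_cons.2 ⟨hj, ht'⟩, by simp [← hlen], ?_⟩
    rw [wordProd_cons, wordProd_cons, ← mul_assoc, hswap, mul_assoc, heq]

lemma apply_root_wordInvIndex_pos (hb : IsBaseSet P b) [P.IsReduced]
    (hf : ∀ j ∈ b, 0 < f (P.root j)) {i : ι} {t : List ι}
    (hl : P.IsReducedWord b (i :: t)) : 0 < f (P.root (P.wordInvIndex t i)) := by
  by_contra hneg
  obtain ⟨t', ht', hlen, heq⟩ := hb.exists_reflection_mul_wordProd_eq hf
    (List.forall_mem_cons.1 hl.1).2 (hf i (hl.1 i (.head _))) hneg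
  have := hl.2 t' ht' (by rw [wordProd_cons, heq])
  simp only [List.length_cons] at this
  omega

variable [Fintype ι]

lemma coroot'_wordProd_pos (hb : IsBaseSet P b) [P.IsReduced] {γ : V}
    (hγ : ∀ j ∈ b, 0 < P.coroot' j γ) {i : ι} {t : List ι}
    (hl : P.IsReducedWord b (i :: t)) : 0 < P.coroot' i (P.wordProd t γ) := by
  have hf : ∀ j ∈ b, 0 < P.RootForm γ (P.root j) := fun j hj =>
    (P.rootForm_apply_root_pos_iff γ j).2 (hγ j hj)
  rw [← rootForm_apply_root_pos_iff, rootForm_wordProd_apply_root]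
  exact hb.apply_root_wordInvIndex_pos hf hl

theorem exists_coeffs_sub_wordProd (hb : IsBaseSet P b) [P.IsReduced] {γ : V}
    (hγ : ∀ j ∈ b, 0 < P.coroot' j γ) :
    ∀ {l : List ι}, P.IsReducedWord b l → ∃ d : ι → ℝ,
      γ - P.wordProd l γ = ∑ j ∈ b, d j • P.root j ∧ ∀ j ∈ b, 0 ≤ d j ∧ (d j ≠ 0 ↔ j ∈ l)
  | [], _ => ⟨0, by simp, by simp⟩
  | i :: t, hl => by
    classical
    obtain ⟨d, hd, hsupp⟩ := hb.exists_coeffs_sub_wordProd hγ hl.of_cons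
    have hi : i ∈ b := hl.1 i (.head _)
    set p := P.coroot' i (P.wordProd t γ)
    have hp : 0 < p := hb.coroot'_wordProd_pos hγ hl
    refine ⟨d + Pi.single i p, ?_, fun j hj => ?_⟩
    · have : γ - P.wordProd (i :: t) γ = (γ - P.wordProd t γ) + p • P.root i := by
        rw [wordProd_cons, LinearEquiv.mul_apply, reflection_apply]
        abel
      rw [this, hd]
      simp [add_smul, sum_add_distrib, Pi.single_apply, hi]
    · obtain rfl | hji := eq_or_ne j i
      · have hdj := (hsupp j hj).1
        simp only [Pi.add_apply, Pi.single_eq_same, List.mem_cons_self, iff_true]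
        constructor <;> linarith
      · simpa [hji] using hsupp j hj

end RootSystem.IsBaseSet

theorem support_reduced_word_eq_support_coeffs_general
    {ι V N : Type*} [Fintype ι] [DecidableEq ι] [AddCommGroup V] [Module ℝ V]
    [AddCommGroup N] [Module ℝ N]
    (P : RootPairing ι ℝ V N) [P.IsRootSystem] (hred : P.IsReduced)
    (b : Finset ι) (hb : RootSystem.IsBaseSet P b)
    (γ : V) (hγ : ∀ j ∈ b, ∃ z : ℤ, 0 < z ∧ (z : ℝ) = P.toLinearMap γ (P.coroot j))
    (w : V ≃ₗ[ℝ] V) (l : List ι) (hl : ∀ i ∈ l, i ∈ b)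
    (hw : w = (l.map fun i => P.reflection i).prod)
    (hmin : ∀ l' : List ι, (∀ i ∈ l', i ∈ b) →
      w = (l'.map fun i => P.reflection i).prod → l.length ≤ l'.length)
    (c : ι → ℕ) (hc : γ - w γ = ∑ j ∈ b, (c j : ℝ) • P.root j) :
    l.toFinset = b.filter fun j => c j ≠ 0 := by
  have hγ' : ∀ j ∈ b, 0 < P.coroot' j γ := fun j hj => by
    obtain ⟨z, hz, hzγ⟩ := hγ j hj
    exact hzγ ▸ Int.cast_pos.2 hz
  have hw' : w = P.wordProd l := hw
  obtain ⟨d, hd, hsupp⟩ := hb.exists_coeffs_sub_wordProd hγ'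
    (⟨hl, fun l' hl' h => hmin l' hl' (hw'.trans h)⟩ : P.IsReducedWord b l)
  have hcd := hb.coeff_eq ((hw' ▸ hc).symm.trans hd)
  ext j
  simp only [List.mem_toFinset, mem_filter]
  refine ⟨fun hj => ⟨hl j hj, fun h0 => ?_⟩, fun ⟨hj, hc0⟩ => (hsupp j hj).2.1 ?_⟩
  · exact (hsupp j (hl j hj)).2.2 hj (by rw [← hcd j (hl j hj), h0, Nat.cast_zero])
  · rw [← hcd j hj]
    exact_mod_cast hc0

/-- **Support of `γ − wγ` equals the support of any reduced word for `w`.**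
For `γ` dominant regular integral (`⟨γ, α∨⟩ ∈ ℤ_{>0}` for all simple `α`), writing
`γ − wγ = Σ_{α ∈ Π} c_α(w)·α`, the set of simple reflections occurring in any reduced
expression of `w` is exactly `{α ∈ Π : c_α(w) ≠ 0}`. -/
theorem support_reduced_word_eq_support_coeffs
    {ι V N : Type*} [Fintype ι] [DecidableEq ι] [AddCommGroup V] [Module ℝ V]
    [FiniteDimensional ℝ V] [AddCommGroup N] [Module ℝ N]
    (P : RootPairing ι ℝ V N) [P.IsRootSystem] (hcrys : P.IsCrystallographic) (hred : P.IsReduced)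
    (b : Finset ι) (hb : RootSystem.IsBaseSet P b)
    (γ : V) (hγ : ∀ j ∈ b, ∃ z : ℤ, 0 < z ∧ (z : ℝ) = P.toLinearMap γ (P.coroot j))
    (w : V ≃ₗ[ℝ] V) (l : List ι) (hl : ∀ i ∈ l, i ∈ b)
    (hw : w = (l.map fun i => P.reflection i).prod)
    (hmin : ∀ l' : List ι, (∀ i ∈ l', i ∈ b) →
      w = (l'.map fun i => P.reflection i).prod → l.length ≤ l'.length)
    (c : ι → ℕ) (hc : γ - w γ = ∑ j ∈ b, (c j : ℝ) • P.root j) :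
    l.toFinset = b.filter fun j => c j ≠ 0 :=
  support_reduced_word_eq_support_coeffs_general P hred b hb γ hγ w l hl hw hmin c hc
end
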